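/- There exist positive finite constants c_1 ≤ c_2 such that for every n ∈ ℕ and every L with 0 < L ≤ 3^n/2: c_1 ≤ (2L+1)^{ln 2/ln 3} / (2^n·(1 − e^{-L/3^n})) · ∫_{C_n(L)} e^{-r} dr ≤ c_2. (With L = πR^2, this is a two-sided asymptotic estimate for the first eigenvalue λ_0(𝒞_n(R)) = ∫_{C_n(πR^2)} e^{-r} dr.) -/

import Mathlib

open Real MeasureTheory

/-- The `n`-iterate mid-third Cantor set based in `[0, L]`:
`C₀(L) = [0,L]` and `C_{n+1}(L) = (1/3)·C_n(L) ∪ (2L/3 + (1/3)·C_n(L))`. -/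
def cantorIterate : ℕ → ℝ → Set ℝ
  | 0, L => Set.Icc 0 L
  | n + 1, L =>
      (fun x => x / 3) '' cantorIterate n L ∪
        (fun x => 2 * L / 3 + x / 3) '' cantorIterate n L

/-!
The self-similarity `C_{n+1}(L) = (C_n(L) ∪ (2L + C_n(L))) / 3` gives the closed form
`∫_{C_n(L)} e^{cr} dr = (e^{cL/3ⁿ} - 1)/c · ∏_{k<n} (1 + e^{2cL/3^{k+1}})`, so at `c = -1` the
normalised quantity is `(2L+1)^{log 2/log 3} · ∏_{k<n} (1 + e^{-2L/3^{k+1}})/2`.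
Split the product at the `m` with `3^m ≤ 2L+1 < 3^{m+1}`. For `k ≥ m` the exponents
`2L/3^{k+1}` sum to at most `3/2`, so these factors multiply to something in `[e^{-3/2}, 1]`.
For `k < m` the factors are `(1 + ε_k)/2` with `ε_k ≤ 3^{k+1}/(2L+1)` summing to at most `3/2`,
so they multiply to something in `2^{-m}·[1, e^{3/2}]`; this is balanced by
`(2L+1)^{log 2/log 3} ∈ [2^m, 2^{m+1}]`.
-/

open Set Finset

lemma pow_rpow_log_div_log {b c : ℝ} (hb : 0 < b) (hb1 : b ≠ 1) (hc : 0 < c) (j : ℕ) :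
    (b ^ j) ^ (log c / log b) = c ^ j := by
  rw [← rpow_natCast b, ← rpow_mul hb.le, mul_comm, rpow_mul hb.le, ← logb, rpow_logb hb hb1 hc,
    rpow_natCast]

lemma setIntegral_image_affine {S : Set ℝ} (hS : MeasurableSet S) {a : ℝ} (ha : a ≠ 0)
    (b : ℝ) (f : ℝ → ℝ) :
    ∫ r in (fun x => a * x + b) '' S, f r = |a| * ∫ x in S, f (a * x + b) := by
  have hderiv (x : ℝ) : HasDerivWithinAt (fun x => a * x + b) a S x := by
    simpa using (((hasDerivAt_id' x).const_mul a).add_const b).hasDerivWithinAt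
  rw [integral_image_eq_integral_abs_deriv_smul hS (fun x _ => hderiv x)
    (fun x _ y _ h => mul_left_cancel₀ ha (add_right_cancel h)), integral_smul, smul_eq_mul]

lemma integral_exp_mul_Icc {L : ℝ} (hL : 0 ≤ L) {c : ℝ} (hc : c ≠ 0) :
    ∫ r in Icc 0 L, exp (c * r) = (exp (c * L) - 1) / c := by
  rw [integral_Icc_eq_integral_Ioc, ← intervalIntegral.integral_of_le hL,
    intervalIntegral.integral_comp_mul_left exp hc, integral_exp, mul_zero, exp_zero,
    smul_eq_mul, inv_mul_eq_div]

lemma sum_Ico_div_three_pow_succ_le {y : ℝ} (hy0 : 0 ≤ y) {m : ℕ} (hy : y ≤ 3 ^ (m + 1))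
    (n : ℕ) :
    ∑ k ∈ Ico m n, y / 3 ^ (k + 1) ≤ 3 / 2 := by
  have hgeom := geom_sum_Ico_le_of_lt_one (x := (1 / 3 : ℝ)) (m := m) (n := n) (by norm_num)
    (by norm_num)
  have hterm (k : ℕ) : y / 3 ^ (k + 1) = y / 3 * (1 / 3) ^ k := by
    rw [pow_succ, one_div_pow]; field_simp
  calc ∑ k ∈ Ico m n, y / 3 ^ (k + 1) = y / 3 * ∑ k ∈ Ico m n, (1 / 3 : ℝ) ^ k := by
        rw [sum_congr rfl fun k _ => hterm k, mul_sum]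
    _ ≤ y / 3 * ((1 / 3) ^ m / (1 - 1 / 3)) := by gcongr
    _ = 3 / 2 * (y / 3 ^ (m + 1)) := by rw [pow_succ, one_div_pow]; field_simp; ring
    _ ≤ 3 / 2 * 1 := by gcongr; exact div_le_one_of_le₀ hy (by positivity)
    _ = 3 / 2 := mul_one _

lemma sum_range_three_pow_succ_le (m : ℕ) : ∑ k ∈ range m, (3 : ℝ) ^ (k + 1) ≤ 3 / 2 * 3 ^ m := by
  have := geom_sum_eq (show (3 : ℝ) ≠ 1 by norm_num) m
  simp only [pow_succ, ← sum_mul, this]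
  linarith

-- Both halves are written as images of `x ↦ a * x + b`, the shape `setIntegral_image_affine` takes.
lemma cantorIterate_succ (n : ℕ) (L : ℝ) :
    cantorIterate (n + 1) L =
      (fun x => 3⁻¹ * x + 0) '' cantorIterate n L ∪
        (fun x => 3⁻¹ * x + 2 * L / 3) '' cantorIterate n L := by
  simp only [cantorIterate, add_zero, ← div_eq_inv_mul, add_comm _ (2 * L / 3)]

lemma cantorIterate_subset_Icc (n : ℕ) {L : ℝ} (hL : 0 ≤ L) :
    cantorIterate n L ⊆ Icc 0 L := by
  induction n with
  | zero => exact subset_rfl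
  | succ n ih =>
    rintro y (⟨x, hx, rfl⟩ | ⟨x, hx, rfl⟩) <;>
    · obtain ⟨h0, hL'⟩ := ih hx
      constructor <;> linarith

lemma isCompact_cantorIterate (n : ℕ) (L : ℝ) : IsCompact (cantorIterate n L) := by
  induction n with
  | zero => exact isCompact_Icc
  | succ n ih => exact (ih.image (by fun_prop)).union (ih.image (by fun_prop))

lemma integral_exp_mul_cantorIterate_succ (n : ℕ) {L : ℝ} (hL : 0 < L) (c : ℝ) :
    ∫ r in cantorIterate (n + 1) L, exp (c * r) =
      (1 + exp (2 * c * L / 3)) / 3 * ∫ r in cantorIterate n L, exp (c / 3 * r) := by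
  have hC := isCompact_cantorIterate n L
  have hCL := cantorIterate_subset_Icc n hL.le
  have hdisj : Disjoint ((fun x => 3⁻¹ * x + 0) '' cantorIterate n L)
      ((fun x => 3⁻¹ * x + 2 * L / 3) '' cantorIterate n L) := by
    rw [Set.disjoint_left]
    rintro _ ⟨x, hx, rfl⟩ ⟨y, hy, hxy⟩
    linarith [(hCL hx).2, (hCL hy).1]
  have hint (b : ℝ) : IntegrableOn (fun r => exp (c * r))
      ((fun x => 3⁻¹ * x + b) '' cantorIterate n L) :=
    (by fun_prop : Continuous fun r => exp (c * r)).continuousOn.integrableOn_compact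
      (hC.image (by fun_prop))
  have hshift (b x : ℝ) : exp (c * (3⁻¹ * x + b)) = exp (c * b) * exp (c / 3 * x) := by
    rw [← exp_add]; ring_nf
  rw [cantorIterate_succ, setIntegral_union hdisj (hC.image (by fun_prop)).measurableSet
    (hint _) (hint _), setIntegral_image_affine hC.measurableSet (by norm_num),
    setIntegral_image_affine hC.measurableSet (by norm_num)]
  simp only [hshift, integral_const_mul, mul_zero, exp_zero]
  ring_nf

theorem integral_exp_mul_cantorIterate (n : ℕ) {L : ℝ} (hL : 0 < L) {c : ℝ} (hc : c ≠ 0) :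
    ∫ r in cantorIterate n L, exp (c * r) =
      (exp (c * L / 3 ^ n) - 1) / c * ∏ k ∈ range n, (1 + exp (2 * c * L / 3 ^ (k + 1))) := by
  induction n generalizing c with
  | zero => simpa [cantorIterate] using integral_exp_mul_Icc hL.le hc
  | succ n ih =>
    rw [integral_exp_mul_cantorIterate_succ n hL, ih (div_ne_zero hc three_ne_zero),
      prod_range_succ']
    field_simp
    ring_nf

noncomputable def cantorFactor (y : ℝ) (k : ℕ) : ℝ := (1 + exp (-(y / 3 ^ (k + 1)))) / 2

lemma integral_exp_neg_cantorIterate (n : ℕ) {L : ℝ} (hL : 0 < L) :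
    ∫ r in cantorIterate n L, exp (-r) =
      (1 - exp (-(L / 3 ^ n))) * (2 ^ n * ∏ k ∈ range n, cantorFactor (2 * L) k) := by
  have h := integral_exp_mul_cantorIterate n hL (c := -1) (by norm_num)
  simp only [neg_one_mul] at h
  unfold cantorFactor
  rw [h, prod_div_distrib, prod_const, card_range, mul_div_cancel₀ _ (by positivity)]
  ring_nf

lemma half_lt_cantorFactor (y : ℝ) (k : ℕ) : 1 / 2 < cantorFactor y k := by
  have := exp_pos (-(y / 3 ^ (k + 1)))
  unfold cantorFactor; linarith

lemma cantorFactor_pos (y : ℝ) (k : ℕ) : 0 < cantorFactor y k :=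
  (half_lt_cantorFactor y k).trans' (by norm_num)

lemma cantorFactor_le_one {y : ℝ} (hy : 0 ≤ y) (k : ℕ) : cantorFactor y k ≤ 1 := by
  have : exp (-(y / 3 ^ (k + 1))) ≤ 1 := exp_le_one_iff.2 (by simp; positivity)
  unfold cantorFactor; linarith

lemma exp_neg_le_cantorFactor {y : ℝ} (hy : 0 ≤ y) (k : ℕ) :
    exp (-(y / 3 ^ (k + 1))) ≤ cantorFactor y k := by
  have : exp (-(y / 3 ^ (k + 1))) ≤ 1 := exp_le_one_iff.2 (by simp; positivity)
  unfold cantorFactor; linarith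

lemma cantorFactor_le_exp_div_two (y : ℝ) (k : ℕ) :
    cantorFactor y k ≤ exp (exp (-(y / 3 ^ (k + 1)))) / 2 := by
  have := add_one_le_exp (exp (-(y / 3 ^ (k + 1))))
  unfold cantorFactor; linarith

lemma exp_neg_three_halves_le_prod_Ico_cantorFactor {y : ℝ} (hy0 : 0 ≤ y) {m : ℕ}
    (hy : y ≤ 3 ^ (m + 1)) (n : ℕ) :
    exp (-(3 / 2)) ≤ ∏ k ∈ Ico m n, cantorFactor y k :=
  calc exp (-(3 / 2)) ≤ exp (∑ k ∈ Ico m n, -(y / 3 ^ (k + 1))) := by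
        rw [sum_neg_distrib, exp_le_exp, neg_le_neg_iff]
        exact sum_Ico_div_three_pow_succ_le hy0 hy n
    _ = ∏ k ∈ Ico m n, exp (-(y / 3 ^ (k + 1))) := exp_sum _ _
    _ ≤ ∏ k ∈ Ico m n, cantorFactor y k :=
        prod_le_prod (fun _ _ => (exp_pos _).le) fun k _ => exp_neg_le_cantorFactor hy0 k

lemma prod_range_cantorFactor_le {y : ℝ} (hy0 : 0 ≤ y) {m : ℕ} (hy : 3 ^ m ≤ y + 1) :
    ∏ k ∈ range m, cantorFactor y k ≤ exp (3 / 2) / 2 ^ m := by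
  have hexp (k : ℕ) : exp (-(y / 3 ^ (k + 1))) ≤ 3 ^ (k + 1) / (y + 1) := by
    have h3 : (1 : ℝ) ≤ 3 ^ (k + 1) := one_le_pow₀ (by norm_num)
    calc exp (-(y / 3 ^ (k + 1))) = (exp (y / 3 ^ (k + 1)))⁻¹ := exp_neg _
      _ ≤ (y / 3 ^ (k + 1) + 1)⁻¹ := inv_anti₀ (by positivity) (add_one_le_exp _)
      _ = 3 ^ (k + 1) / (y + 3 ^ (k + 1)) := by field_simp
      _ ≤ 3 ^ (k + 1) / (y + 1) := by gcongr
  have hsum : ∑ k ∈ range m, exp (-(y / 3 ^ (k + 1))) ≤ 3 / 2 :=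
    calc ∑ k ∈ range m, exp (-(y / 3 ^ (k + 1))) ≤ ∑ k ∈ range m, (3 : ℝ) ^ (k + 1) / (y + 1) :=
          sum_le_sum fun k _ => hexp k
      _ ≤ 3 / 2 := by
          rw [← sum_div, div_le_iff₀ (by linarith)]
          nlinarith [sum_range_three_pow_succ_le m]
  calc ∏ k ∈ range m, cantorFactor y k ≤ ∏ k ∈ range m, exp (exp (-(y / 3 ^ (k + 1)))) / 2 :=
        prod_le_prod (fun k _ => (cantorFactor_pos y k).le)
          fun k _ => cantorFactor_le_exp_div_two y k
    _ = exp (∑ k ∈ range m, exp (-(y / 3 ^ (k + 1)))) / 2 ^ m := by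
        rw [prod_div_distrib, prod_const, card_range, exp_sum]
    _ ≤ exp (3 / 2) / 2 ^ m := by gcongr

theorem rpow_mul_prod_cantorFactor_mem_Icc {y : ℝ} (hy : 0 ≤ y) {n : ℕ} (hyn : y ≤ 3 ^ n) :
    (y + 1) ^ (log 2 / log 3) * ∏ k ∈ range n, cantorFactor y k ∈
      Icc (exp (-(3 / 2))) (2 * exp (3 / 2)) := by
  obtain ⟨m, hm, hm'⟩ := exists_nat_pow_near (by linarith : 1 ≤ y + 1) (by norm_num : (1 : ℝ) < 3)
  have hmn : m ≤ n := by
    have : (3 : ℝ) ^ m < 3 ^ (n + 1) := by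
      have : (1 : ℝ) ≤ 3 ^ n := one_le_pow₀ (by norm_num)
      rw [pow_succ]; linarith
    exact Nat.lt_succ_iff.1 ((pow_lt_pow_iff_right₀ (by norm_num)).1 this)
  have hα : 0 ≤ log 2 / log 3 := by positivity
  have hpow (j : ℕ) : ((3 : ℝ) ^ j) ^ (log 2 / log 3) = 2 ^ j :=
    pow_rpow_log_div_log (by norm_num) (by norm_num) (by norm_num) j
  have hlow : (2 : ℝ) ^ m ≤ (y + 1) ^ (log 2 / log 3) :=
    hpow m ▸ rpow_le_rpow (by positivity) hm hα
  have hup : (y + 1) ^ (log 2 / log 3) ≤ 2 ^ (m + 1) :=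
    hpow (m + 1) ▸ rpow_le_rpow (by positivity) hm'.le hα
  have hhead : (1 / 2 : ℝ) ^ m ≤ ∏ k ∈ range m, cantorFactor y k := by
    simpa using prod_le_prod (s := range m) (fun _ _ => by norm_num)
      fun k _ => (half_lt_cantorFactor y k).le
  have htail : ∏ k ∈ Ico m n, cantorFactor y k ≤ 1 :=
    prod_le_one (fun k _ => (cantorFactor_pos y k).le)
      fun k _ => cantorFactor_le_one hy k
  have htail' := exp_neg_three_halves_le_prod_Ico_cantorFactor hy (by linarith) n
  have hhead' := prod_range_cantorFactor_le hy hm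
  have hpos (s : Finset ℕ) : 0 ≤ ∏ k ∈ s, cantorFactor y k :=
    (prod_pos fun k _ => cantorFactor_pos y k).le
  rw [← prod_range_mul_prod_Ico _ hmn]
  constructor
  · calc exp (-(3 / 2)) = 2 ^ m * ((1 / 2) ^ m * exp (-(3 / 2))) := by
          rw [← mul_assoc, ← mul_pow]; norm_num
      _ ≤ _ := mul_le_mul hlow (mul_le_mul hhead htail' (by positivity) (hpos _)) (by positivity)
          (by positivity)
  · calc _ ≤ (2 : ℝ) ^ (m + 1) * (exp (3 / 2) / 2 ^ m * 1) :=
          mul_le_mul hup (mul_le_mul hhead' htail (hpos _) (by positivity))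
            (mul_nonneg (hpos _) (hpos _)) (by positivity)
      _ = 2 * exp (3 / 2) := by rw [pow_succ]; field_simp

/-- Two-sided asymptotic estimate for the first eigenvalue
`λ₀ = ∫_{C_n(L)} e^{-r} dr`: uniformly in `n` and `0 < L ≤ 3ⁿ/2`,
`λ₀ ≍ 2ⁿ(1-e^{-L/3ⁿ})·(2L+1)^{-ln2/ln3}`. -/
theorem cantor_first_eigenvalue_asymptotics :
    ∃ c₁ c₂ : ℝ, 0 < c₁ ∧ c₁ ≤ c₂ ∧
      ∀ n : ℕ, ∀ L : ℝ, 0 < L → L ≤ 3 ^ n / 2 →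
        c₁ ≤ (2 * L + 1) ^ (Real.log 2 / Real.log 3) /
            (2 ^ n * (1 - Real.exp (-(L / 3 ^ n)))) *
            (∫ r in cantorIterate n L, Real.exp (-r)) ∧
        (2 * L + 1) ^ (Real.log 2 / Real.log 3) /
            (2 ^ n * (1 - Real.exp (-(L / 3 ^ n)))) *
            (∫ r in cantorIterate n L, Real.exp (-r)) ≤ c₂ := by
  refine ⟨exp (-(3 / 2)), 2 * exp (3 / 2), exp_pos _, ?_, fun n L hL hLn => ?_⟩
  · have := exp_le_exp.2 (show -(3 / 2 : ℝ) ≤ 3 / 2 by norm_num)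
    linarith [exp_pos (3 / 2 : ℝ)]
  have hgap : 0 < 1 - exp (-(L / 3 ^ n)) := sub_pos.2 (exp_lt_one_iff.2 (by simp; positivity))
  have hratio : (2 * L + 1) ^ (log 2 / log 3) / (2 ^ n * (1 - exp (-(L / 3 ^ n)))) *
      (∫ r in cantorIterate n L, exp (-r)) =
        (2 * L + 1) ^ (log 2 / log 3) * ∏ k ∈ range n, cantorFactor (2 * L) k := by
    rw [integral_exp_neg_cantorIterate n hL]
    field_simp
  rw [hratio]
  exact rpow_mul_prod_cantorFactor_mem_Icc (by positivity) (by linarith)
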